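/- arXiv:2505.07505 — 2 statements merged into one kernel-verified Lean document; each statement's English description precedes it below -/
import Mathlib

section
/- Let f : ℤ^2 → ℂ be supported in B_r ∩ ℤ^2 for some r > 0. For z ∈ ℤ^2 \ {0} let γ_z be the line through z perpendicular to z (direction ẑ_⋆ = (−z_2, z_1)/|z|), and for z = 0 let γ_0 be a fixed line through 0 with rational direction. If Pf(γ_z) = 0 for all z ∈ ℤ^2, then f ≡ 0, where Pf(γ) = Σ_{y ∈ γ ∩ ℤ^2} f(y). -/
open RealInnerProductSpace

noncomputable def L (d : ℕ) (z : Fin d → ℤ) : EuclideanSpace ℝ (Fin d) := WithLp.toLp 2 (fun i => (z i : ℝ))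

noncomputable def zstar (z : Fin 2 → ℤ) : EuclideanSpace ℝ (Fin 2) :=
  ‖L 2 z‖⁻¹ • (WithLp.toLp 2 ![-(z 1 : ℝ), (z 0 : ℝ)] : EuclideanSpace ℝ (Fin 2))

/-- Downward induction on `N`: the vanishing sum over the set attached to `z` reduces to `f z`. -/
theorem eq_zero_of_tsum_eq_zero_of_lt {α M : Type*} [AddCommMonoid M] [TopologicalSpace M]
    (N : α → ℤ) (B : ℤ) (f : α → M) (hf : ∀ z, f z ≠ 0 → N z ≤ B)
    (hs : ∀ z, ∃ s : Set α, z ∈ s ∧ (∀ y ∈ s, y ≠ z → N z < N y) ∧ ∑' y : s, f y = 0) :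
    ∀ z, f z = 0 := by
  have key : ∀ k : ℕ, ∀ z, B - k < N z → f z = 0 := by
    intro k
    induction k with
    | zero => exact fun z hz => not_imp_comm.1 (hf z) (by simpa using hz)
    | succ k ih =>
      intro z hz
      obtain ⟨s, hzs, hlt, hsum⟩ := hs z
      rw [← hsum, tsum_eq_single ⟨z, hzs⟩]
      rintro ⟨y, hys⟩ hyz
      have hzy := hlt y hys fun h => hyz (Subtype.ext h)
      exact ih y (by push_cast at hz; omega)
  intro z
  exact key (B - N z + 1).toNat z (by omega)

theorem inner_L (d : ℕ) (y z : Fin d → ℤ) : ⟪L d y, L d z⟫ = ((y ⬝ᵥ z : ℤ) : ℝ) := by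
  simp [L, dotProduct, PiLp.inner_apply, mul_comm]

theorem norm_L_sq (d : ℕ) (z : Fin d → ℤ) : ‖L d z‖ ^ 2 = ((z ⬝ᵥ z : ℤ) : ℝ) := by
  rw [← real_inner_self_eq_norm_sq, inner_L]

theorem inner_zstar_L (z : Fin 2 → ℤ) : ⟪zstar z, L 2 z⟫ = 0 := by
  rw [zstar, inner_smul_left, PiLp.inner_apply, Fin.sum_univ_two, mul_eq_zero]
  right
  simp [L]
  ring

theorem dotProduct_eq_of_mem_perp_line {z y : Fin 2 → ℤ} {t : ℝ}
    (hy : L 2 y = L 2 z + t • zstar z) : y ⬝ᵥ z = z ⬝ᵥ z := by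
  have := congrArg (⟪·, L 2 z⟫) hy
  simp only [inner_add_left, inner_smul_left, inner_zstar_L, inner_L, mul_zero, add_zero] at this
  exact_mod_cast this

-- Pythagoras, with `|y - z|² ≥ 1` for distinct lattice points.
theorem dotProduct_self_lt_of_dotProduct_eq {ι : Type*} [Fintype ι] {y z : ι → ℤ}
    (h : y ⬝ᵥ z = z ⬝ᵥ z) (hne : y ≠ z) : z ⬝ᵥ z < y ⬝ᵥ y := by
  have hpos : 0 < (y - z) ⬝ᵥ (y - z) :=
    lt_of_le_of_ne (dotProduct_self_star_nonneg (y - z))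
      (Ne.symm (dotProduct_self_eq_zero.not.2 (sub_ne_zero.2 hne)))
  simp only [sub_dotProduct, dotProduct_sub, dotProduct_comm z y, h] at hpos
  linarith

theorem stmt4_general (r : ℝ) (f : (Fin 2 → ℤ) → ℂ)
    (hf : ∀ z, f z ≠ 0 → ‖L 2 z‖ ≤ r)
    (z0 : Fin 2 → ℤ)
    (h0 : ∑' y : {y : Fin 2 → ℤ // ∃ t : ℝ, L 2 y = t • L 2 z0}, f y = 0)
    (h : ∀ z : Fin 2 → ℤ, z ≠ 0 →
      ∑' y : {y : Fin 2 → ℤ // ∃ t : ℝ, L 2 y = L 2 z + t • zstar z}, f y = 0) :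
    ∀ z, f z = 0 := by
  refine eq_zero_of_tsum_eq_zero_of_lt (fun z => z ⬝ᵥ z) ⌊r ^ 2⌋ f
    (fun z hz => Int.le_floor.2 ?_) fun z => ?_
  · rw [← norm_L_sq]
    exact pow_le_pow_left₀ (norm_nonneg _) (hf z hz) 2
  by_cases hz : z = 0
  · subst hz
    refine ⟨{y | ∃ t : ℝ, L 2 y = t • L 2 z0}, ⟨0, by ext; simp [L]⟩,
      fun y _ hy => dotProduct_self_lt_of_dotProduct_eq (by simp) hy, h0⟩
  · refine ⟨{y | ∃ t : ℝ, L 2 y = L 2 z + t • zstar z}, ⟨0, by simp⟩,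
      fun y ⟨t, hy⟩ hne => dotProduct_self_lt_of_dotProduct_eq
        (dotProduct_eq_of_mem_perp_line hy) hne, h z hz⟩

theorem stmt4 (r : ℝ) (hr : 0 < r) (f : (Fin 2 → ℤ) → ℂ)
    (hf : ∀ z, f z ≠ 0 → ‖L 2 z‖ ≤ r)
    (z0 : Fin 2 → ℤ) (hz0 : z0 ≠ 0)
    (h0 : ∑' y : {y : Fin 2 → ℤ // ∃ t : ℝ, L 2 y = t • L 2 z0}, f y = 0)
    (h : ∀ z : Fin 2 → ℤ, z ≠ 0 →
      ∑' y : {y : Fin 2 → ℤ // ∃ t : ℝ, L 2 y = L 2 z + t • zstar z}, f y = 0) :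
    ∀ z, f z = 0 :=
  stmt4_general r f hf z0 h0 h
end

section
/- Let f : ℤ^2 → ℂ be supported in B_r ∩ ℤ^2, and let 0 ≤ α ≤ β with β ≥ r. Then the values Pf(γ_z) for all z ∈ ℤ^2 with α ≤ |z| ≤ β uniquely determine f(z) for all z ∈ ℤ^2 with α ≤ |z| ≤ β. -/
open RealInnerProductSpace

/-! If `f` and `g` disagreed somewhere in `α ≤ |z|`, take such a `z` of maximal norm: there are
finitely many, all in `B_r`. By Pythagoras every other lattice point of `γ_z` is farther out, so
`f` and `g` agree there, and the equal sums over `γ_z` force `f z = g z`. -/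

theorem forall_of_finite_setOf_not {X β : Type*} [LinearOrder β] (μ : X → β) {P : X → Prop}
    (hfin : {x | ¬ P x}.Finite) (step : ∀ x, (∀ y, μ x < μ y → P y) → P x) (x : X) : P x := by
  by_contra hx
  obtain ⟨x₀, hx₀, hmax⟩ := Set.exists_max_image _ μ hfin ⟨x, hx⟩
  exact hx₀ <| step x₀ fun y hy => by_contra fun hPy => (hmax y hPy).not_gt hy

theorem eq_of_tsum_subtype_eq {X G : Type*} [AddCommGroup G] [TopologicalSpace G]
    [IsTopologicalAddGroup G] [T2Space G] {f g : X → G} {p : X → Prop}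
    (hf : (Function.support f).Finite) (hg : (Function.support g).Finite) {z : X} (hz : p z)
    (hothers : ∀ y, p y → y ≠ z → f y = g y)
    (hsum : ∑' y : {y // p y}, f y = ∑' y : {y // p y}, g y) : f z = g z := by
  have summable {h : X → G} (hh : (Function.support h).Finite) :
      Summable fun y : {y // p y} => h y :=
    summable_of_hasFiniteSupport <| hh.preimage Subtype.val_injective.injOn
  have hdiff : ∑' y : {y // p y}, (f y - g y) = 0 := by
    rw [(summable hf).tsum_sub (summable hg), hsum, sub_self]
  rw [tsum_eq_single (⟨z, hz⟩ : {y // p y}) fun y hy => sub_eq_zero.mpr <|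
    hothers y y.2 fun e => hy (Subtype.ext e)] at hdiff
  exact sub_eq_zero.mp hdiff

theorem norm_lt_norm_add_of_inner_eq_zero {E : Type*} [NormedAddCommGroup E]
    [InnerProductSpace ℝ E] {x v : E} (hxv : ⟪x, v⟫ = 0) (hv : v ≠ 0) : ‖x‖ < ‖x + v‖ := by
  have hpyth := norm_add_sq_eq_norm_sq_add_norm_sq_real hxv
  have hvpos := norm_pos_iff.mpr hv
  nlinarith [norm_nonneg x, norm_nonneg (x + v)]

theorem L_injective (d : ℕ) : Function.Injective (L d) := fun _ _ h =>
  funext fun i => Int.cast_injective (α := ℝ) (congrArg (fun v : EuclideanSpace ℝ (Fin d) => v i) h)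

theorem L_zero (d : ℕ) : L d 0 = 0 := by
  ext i; simp [L]

theorem abs_le_norm_L {d : ℕ} (z : Fin d → ℤ) (i : Fin d) : |(z i : ℝ)| ≤ ‖L d z‖ :=
  PiLp.norm_apply_le (L d z) i

theorem finite_setOf_norm_L_le (d : ℕ) (R : ℝ) : {z : Fin d → ℤ | ‖L d z‖ ≤ R}.Finite := by
  refine (Set.finite_Icc (-⌈R⌉ : Fin d → ℤ) ⌈R⌉).subset fun z hz => ?_
  have hzi (i : Fin d) : |z i| ≤ ⌈R⌉ := by
    have : ((|z i| : ℤ) : ℝ) ≤ ⌈R⌉ := by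
      push_cast
      exact (abs_le_norm_L z i).trans (hz.trans (Int.le_ceil R))
    exact_mod_cast this
  exact ⟨fun i => neg_le_of_abs_le (hzi i), fun i => le_of_abs_le (hzi i)⟩

theorem inner_L_zstar (z : Fin 2 → ℤ) : ⟪L 2 z, zstar z⟫ = 0 := by
  simp only [zstar, L, PiLp.inner_apply, RCLike.inner_apply, conj_trivial, Fin.sum_univ_two,
    PiLp.smul_apply, Matrix.cons_val_zero, Matrix.cons_val_one, Matrix.cons_val_fin_one, smul_eq_mul]
  ring

theorem norm_L_lt_of_mem_perpLine {y z : Fin 2 → ℤ} {t : ℝ} (hy : L 2 y = L 2 z + t • zstar z)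
    (hyz : y ≠ z) : ‖L 2 z‖ < ‖L 2 y‖ := by
  have hv : t • zstar z ≠ 0 := fun h0 => hyz (L_injective 2 (by rw [hy, h0, add_zero]))
  rw [hy]
  exact norm_lt_norm_add_of_inner_eq_zero (by rw [real_inner_smul_right, inner_L_zstar, mul_zero]) hv

theorem stmt5_general (r α β : ℝ) (hβ : r ≤ β)
    (f g : (Fin 2 → ℤ) → ℂ)
    (hf : ∀ z, f z ≠ 0 → ‖L 2 z‖ ≤ r) (hg : ∀ z, g z ≠ 0 → ‖L 2 z‖ ≤ r)
    (z0 : Fin 2 → ℤ)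
    (h0 : α ≤ 0 →
      ∑' y : {y : Fin 2 → ℤ // ∃ t : ℝ, L 2 y = t • L 2 z0}, f y =
      ∑' y : {y : Fin 2 → ℤ // ∃ t : ℝ, L 2 y = t • L 2 z0}, g y)
    (h : ∀ z : Fin 2 → ℤ, z ≠ 0 → α ≤ ‖L 2 z‖ → ‖L 2 z‖ ≤ β →
      ∑' y : {y : Fin 2 → ℤ // ∃ t : ℝ, L 2 y = L 2 z + t • zstar z}, f y =
      ∑' y : {y : Fin 2 → ℤ // ∃ t : ℝ, L 2 y = L 2 z + t • zstar z}, g y) :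
    ∀ z : Fin 2 → ℤ, α ≤ ‖L 2 z‖ → ‖L 2 z‖ ≤ β → f z = g z := by
  have hfin_f : (Function.support f).Finite := (finite_setOf_norm_L_le 2 r).subset hf
  have hfin_g : (Function.support g).Finite := (finite_setOf_norm_L_le 2 r).subset hg
  have hbad : {z | ¬ (α ≤ ‖L 2 z‖ → f z = g z)}.Finite :=
    ((hfin_f.union hfin_g).subset (Function.support_sub f g)).subset fun _ hz =>
      sub_ne_zero.mpr fun hfg => hz fun _ => hfg
  refine fun z hzα _ => forall_of_finite_setOf_not (fun z => ‖L 2 z‖) hbad (fun z ih hzα => ?_) z hzα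
  by_cases hzβ : ‖L 2 z‖ ≤ β
  · have peel {p : (Fin 2 → ℤ) → Prop} (hz : p z) (hfar : ∀ y, p y → y ≠ z → ‖L 2 z‖ < ‖L 2 y‖)
        (hsum : ∑' y : {y // p y}, f y = ∑' y : {y // p y}, g y) : f z = g z :=
      eq_of_tsum_subtype_eq hfin_f hfin_g hz
        (fun y hy hyz => ih y (hfar y hy hyz) (hzα.trans (hfar y hy hyz).le)) hsum
    rcases eq_or_ne z 0 with rfl | hz0
    · have hα0 : α ≤ 0 := by rwa [L_zero, norm_zero] at hzα
      refine peel ⟨0, by rw [zero_smul, L_zero]⟩ (fun y _ hy => ?_) (h0 hα0)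
      rw [L_zero, norm_zero, norm_pos_iff, ← L_zero 2]
      exact (L_injective 2).ne hy
    · exact peel ⟨0, by rw [zero_smul, add_zero]⟩ (fun y ⟨_, hy⟩ => norm_L_lt_of_mem_perpLine hy)
        (h z hz0 hzα hzβ)
  · have hr : r < ‖L 2 z‖ := hβ.trans_lt (not_le.mp hzβ)
    rw [not_imp_comm.mp (hf z) hr.not_ge, not_imp_comm.mp (hg z) hr.not_ge]

theorem stmt5 (r α β : ℝ) (hr : 0 < r) (hα : 0 ≤ α) (hαβ : α ≤ β) (hβ : r ≤ β)
    (f g : (Fin 2 → ℤ) → ℂ)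
    (hf : ∀ z, f z ≠ 0 → ‖L 2 z‖ ≤ r) (hg : ∀ z, g z ≠ 0 → ‖L 2 z‖ ≤ r)
    (z0 : Fin 2 → ℤ) (hz0 : z0 ≠ 0)
    (h0 : α ≤ 0 →
      ∑' y : {y : Fin 2 → ℤ // ∃ t : ℝ, L 2 y = t • L 2 z0}, f y =
      ∑' y : {y : Fin 2 → ℤ // ∃ t : ℝ, L 2 y = t • L 2 z0}, g y)
    (h : ∀ z : Fin 2 → ℤ, z ≠ 0 → α ≤ ‖L 2 z‖ → ‖L 2 z‖ ≤ β →
      ∑' y : {y : Fin 2 → ℤ // ∃ t : ℝ, L 2 y = L 2 z + t • zstar z}, f y =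
      ∑' y : {y : Fin 2 → ℤ // ∃ t : ℝ, L 2 y = L 2 z + t • zstar z}, g y) :
    ∀ z : Fin 2 → ℤ, α ≤ ‖L 2 z‖ → ‖L 2 z‖ ≤ β → f z = g z :=
  stmt5_general r α β hβ f g hf hg z0 h0 h
end
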